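/- Let Q_ε be Hermitian with Q_ε > Q, and assume Condition (C) holds for (A, Q). Let (A^(k), B^(k), Q^(k)) and (A_ε^(k), B_ε^(k), Q_ε^(k)) be the sequences for the plus-sign equation built from (A, Q) and (A, Q_ε), respectively. Then both sequences are well defined and for every k ≥ 1: Q_ε^(k) − Q^(k) ≥ Q_ε − Q and B_ε^(k) ≤ B^(k) in the Loewner order. -/

import Mathlib

open Matrix Filter Topology
open scoped ComplexOrder

noncomputable section

/-- Square complex matrices of size `n`. -/
abbrev Mat (n : ℕ) := Matrix (Fin n) (Fin n) ℂ

/-- An operator `f` on complex `n × n` matrices is *admissible* if it satisfies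
(a1) `f (f X) = X`, (a2) additivity, (a3) multiplicativity, and
(a4) `f X` is positive semidefinite whenever `X` is. -/
def Admissible {n : ℕ} (f : Mat n → Mat n) : Prop :=
  (∀ X, f (f X) = X) ∧
  (∀ X Y, f (X + Y) = f X + f Y) ∧
  (∀ X Y, f (X * Y) = f X * f Y) ∧
  (∀ X, X.PosSemidef → (f X).PosSemidef)

/-- The general recursion of the paper: with constant matrices `(Ac, Bc, Qc)` and
initial triple `init = (A⁽¹⁾, B⁽¹⁾, Q⁽¹⁾)`, step
`(A, B, Q) ↦ (Ac (Qc - B)⁻¹ A, Bc + Ac (Qc - B)⁻¹ Acᴴ, Q - Aᴴ (Qc - B)⁻¹ A)`.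
Index `k : ℕ` corresponds to the paper's index `k + 1`. -/
def nmeIter {n : ℕ} (Ac Bc Qc : Mat n) (init : Mat n × Mat n × Mat n) :
    ℕ → Mat n × Mat n × Mat n
  | 0 => init
  | k + 1 =>
    let p := nmeIter Ac Bc Qc init k
    (Ac * (Qc - p.2.1)⁻¹ * p.1,
     Bc + Ac * (Qc - p.2.1)⁻¹ * Acᴴ,
     p.2.2 - p.1ᴴ * (Qc - p.2.1)⁻¹ * p.1)

/-- The sequence `(A⁽ᵏ⁾, B⁽ᵏ⁾, Q⁽ᵏ⁾)` (indexed from `0`, so `plusSeq f A Q k` is the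
paper's `(A^{(k+1)}, B^{(k+1)}, Q^{(k+1)})`) for the plus-sign equation
`X + Aᴴ f(X)⁻¹ A = Q`. -/
def plusSeq {n : ℕ} (f : Mat n → Mat n) (A Q : Mat n) : ℕ → Mat n × Mat n × Mat n :=
  nmeIter (f A * (f Q)⁻¹ * A) (f A * (f Q)⁻¹ * (f A)ᴴ) (Q - Aᴴ * (f Q)⁻¹ * A)
    (f A * (f Q)⁻¹ * A, f A * (f Q)⁻¹ * (f A)ᴴ, Q - Aᴴ * (f Q)⁻¹ * A)

/-- `As f A Q k` is the paper's `A^{(k+1)}`. -/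
def As {n : ℕ} (f : Mat n → Mat n) (A Q : Mat n) (k : ℕ) : Mat n := (plusSeq f A Q k).1
/-- `Bs f A Q k` is the paper's `B^{(k+1)}`. -/
def Bs {n : ℕ} (f : Mat n → Mat n) (A Q : Mat n) (k : ℕ) : Mat n := (plusSeq f A Q k).2.1
/-- `Qs f A Q k` is the paper's `Q^{(k+1)}`. -/
def Qs {n : ℕ} (f : Mat n → Mat n) (A Q : Mat n) (k : ℕ) : Mat n := (plusSeq f A Q k).2.2

/-!
Write `Φ X = Q - Aᴴ f(X)⁻¹ A` and `Y m = Φ^m Q`, and let `Z m` be the dual iteration, the same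
with `(f A)ᴴ` in place of `A`. An admissible `f` is a ring automorphism preserving positivity,
hence it also commutes with `ᴴ` and `⁻¹`.

Condition (C) keeps `Y m ≥ X_S > 0`. Applying `f` and exchanging the two Schur complements of a
positive block matrix turns `Z t - Aᴴ f(Y m)⁻¹ A > 0` into `Y m - f(A) f(Z t)⁻¹ f(A)ᴴ > 0`; by
induction on `t` this gives `Y m + Z t - Q > 0` for all `m`, `t`.

By the Woodbury identity, `Φ²` is the linear fractional map `X ↦ Q⁽¹⁾ - A⁽¹⁾ᴴ (X - B⁽¹⁾)⁻¹ A⁽¹⁾`,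
and the recursion for `(A⁽ᵏ⁾, B⁽ᵏ⁾, Q⁽ᵏ⁾)` is precomposition with it, so `Φ^(2k)` is the map built
from the `k`-th triple. Hence `Q⁽ᵏ⁾ = Y (2k-1)` and `B⁽ᵏ⁾ = Q - Z (2k-1)`, so every matrix inverted
by the recursion is positive definite, and both comparisons reduce to the monotonicity of `Φ`:
raising `Q` by `Q_ε - Q` raises every `Y m` and `Z m` by at least `Q_ε - Q`.
-/

open scoped MatrixOrder

namespace Matrix

variable {𝕜 : Type*} [RCLike 𝕜] {m n : Type*}

lemma PosDef.of_le {A B : Matrix n n 𝕜} (hA : A.PosDef) (h : A ≤ B) : B.PosDef := by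
  simpa using hA.add_posSemidef h

lemma nsmul_right_injective {α : Type*} [AddCommMonoid α] [IsAddTorsionFree α] {k : ℕ}
    (hk : k ≠ 0) : Function.Injective (fun X : Matrix m n α => k • X) :=
  -- `Matrix` does not inherit the `IsAddTorsionFree` instance of the function type
  _root_.nsmul_right_injective (M := m → n → α) hk

variable [Fintype m] [Fintype n] [DecidableEq m] [DecidableEq n]

open scoped Matrix.Norms.L2Operator in
lemma PosDef.inv_le_inv {A B : Matrix n n ℂ} (hA : A.PosDef) (h : A ≤ B) : B⁻¹ ≤ A⁻¹ := by
  rw [nonsing_inv_eq_ringInverse, nonsing_inv_eq_ringInverse]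
  exact CStarAlgebra.ringInverse_le_ringInverse h hA.isStrictlyPositive

lemma PosDef.schur_complement_swap {A : Matrix m m 𝕜} {D : Matrix n n 𝕜} (B : Matrix m n 𝕜)
    (hA : A.PosDef) (hD : D.PosDef) (h : (D - Bᴴ * A⁻¹ * B).PosDef) :
    (A - B * D⁻¹ * Bᴴ).PosDef := by
  let := hA.isUnit.invertible
  let := hD.isUnit.invertible
  have hpsd : (fromBlocks A B Bᴴ D).PosSemidef :=
    (PosDef.fromBlocks₁₁ B D hA).mpr h.posSemidef
  refine ((PosDef.fromBlocks₂₂ A B hD).mp hpsd).posDef_iff_det_ne_zero.mpr fun h0 => ?_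
  have hdet := (det_fromBlocks₁₁ A B Bᴴ D).symm.trans (det_fromBlocks₂₂ A B Bᴴ D)
  rw [invOf_eq_nonsing_inv, invOf_eq_nonsing_inv, h0, mul_zero] at hdet
  exact (mul_ne_zero hA.det_pos.ne' h.det_pos.ne') hdet

variable {α : Type*} [CommRing α]

lemma sub_mul_inv_mul_inv_eq_add (M : Matrix n n α) (U : Matrix n m α) (V : Matrix m m α)
    (W : Matrix m n α) (hM : IsUnit M) (hV : IsUnit V) (hS : IsUnit (V - W * M⁻¹ * U)) :
    (M - U * V⁻¹ * W)⁻¹ = M⁻¹ + M⁻¹ * U * (V - W * M⁻¹ * U)⁻¹ * W * M⁻¹ := by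
  have hV' : (V⁻¹)⁻¹ = V := nonsing_inv_nonsing_inv V ((isUnit_iff_isUnit_det V).mp hV)
  have h := add_mul_mul_inv_eq_sub M (-U) V⁻¹ W hM (isUnit_nonsing_inv_iff.mpr hV)
    (by simpa [hV', sub_eq_add_neg] using hS)
  simpa [hV', sub_eq_add_neg] using h

end Matrix

namespace Admissible

variable {n : ℕ} {f : Mat n → Mat n}

def ringEquiv (hf : Admissible f) : Mat n ≃+* Mat n where
  toFun := f
  invFun := f
  left_inv := hf.1
  right_inv := hf.1
  map_mul' := hf.2.2.1
  map_add' := hf.2.1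

@[simp] lemma coe_ringEquiv (hf : Admissible f) : ⇑hf.ringEquiv = f := rfl

lemma map_map (hf : Admissible f) (X : Mat n) : f (f X) = X := hf.1 X

lemma map_mul (hf : Admissible f) (X Y : Mat n) : f (X * Y) = f X * f Y := hf.2.2.1 X Y

lemma map_add (hf : Admissible f) (X Y : Mat n) : f (X + Y) = f X + f Y := hf.2.1 X Y

lemma map_nsmul (hf : Admissible f) (k : ℕ) (X : Mat n) : f (k • X) = k • f X :=
  _root_.map_nsmul hf.ringEquiv k X

lemma map_sub (hf : Admissible f) (X Y : Mat n) : f (X - Y) = f X - f Y :=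
  _root_.map_sub hf.ringEquiv X Y

lemma map_posSemidef (hf : Admissible f) {X : Mat n} (hX : X.PosSemidef) : (f X).PosSemidef :=
  hf.2.2.2 X hX

lemma map_le (hf : Admissible f) {X Y : Mat n} (h : X ≤ Y) : f X ≤ f Y := by
  rw [le_iff, ← hf.map_sub]
  exact hf.map_posSemidef h

lemma map_inv (hf : Admissible f) (X : Mat n) : f X⁻¹ = (f X)⁻¹ := by
  by_cases hX : IsUnit X
  · refine (inv_eq_left_inv ?_).symm
    rw [← hf.map_mul, nonsing_inv_mul _ ((isUnit_iff_isUnit_det X).mp hX), ← hf.coe_ringEquiv,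
      _root_.map_one]
  · have hfX : ¬IsUnit (f X) := by simpa using (MulEquiv.isUnit_map hf.ringEquiv).not.mpr hX
    rw [nonsing_inv_eq_ringInverse, nonsing_inv_eq_ringInverse, Ring.inverse_non_unit _ hX,
      Ring.inverse_non_unit _ hfX, ← hf.coe_ringEquiv, _root_.map_zero]

lemma map_posDef (hf : Admissible f) {X : Mat n} (hX : X.PosDef) : (f X).PosDef :=
  (hf.map_posSemidef hX.posSemidef).posDef_iff_isUnit.mpr <| by
    simpa using hX.isUnit.map hf.ringEquiv

lemma isHermitian_map (hf : Admissible f) {H : Mat n} (hH : H.IsHermitian) :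
    (f H).IsHermitian := by
  have h4 : 4 • H = (H + 1)ᴴ * (H + 1) - (H - 1)ᴴ * (H - 1) := by
    rw [conjTranspose_add, conjTranspose_sub, hH.eq, conjTranspose_one]
    noncomm_ring
  have h : (4 • f H).IsHermitian := by
    rw [← hf.map_nsmul, h4, hf.map_sub]
    exact (hf.map_posSemidef (posSemidef_conjTranspose_mul_self _)).isHermitian.sub
      (hf.map_posSemidef (posSemidef_conjTranspose_mul_self _)).isHermitian
  rw [IsHermitian, conjTranspose_nsmul] at h
  exact Matrix.nsmul_right_injective four_ne_zero h

lemma commute_map_I_smul_one (hf : Admissible f) (X : Mat n) :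
    Commute X (f (Complex.I • 1)) := by
  rw [← hf.map_map X]
  simpa using ((Commute.one_right (f X)).smul_right Complex.I).map hf.ringEquiv

lemma conjTranspose_map_I_smul_one (hf : Admissible f) :
    (f (Complex.I • 1))ᴴ = -f (Complex.I • 1) := by
  rcases subsingleton_or_nontrivial (Mat n) with _ | _
  · exact Subsingleton.elim _ _
  -- `f (i • 1)` is central with square `-1`, so it is `± i • 1`
  obtain ⟨c, hc⟩ := mem_range_scalar_of_commute_single fun _ _ _ => hf.commute_map_I_smul_one _
  rw [scalar_apply, ← smul_one_eq_diagonal] at hc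
  have hsq : (Complex.I • 1 : Mat n) * (Complex.I • 1) = -1 := by
    rw [smul_mul_smul_comm, Complex.I_mul_I, one_mul, neg_one_smul]
  have hc2 : c * c = -1 := by
    apply smul_left_injective ℂ (one_ne_zero (α := Mat n))
    have := congrArg f hsq
    rw [hf.map_mul, ← hc, ← hf.coe_ringEquiv, _root_.map_neg, _root_.map_one] at this
    simpa [smul_mul_smul_comm, smul_smul] using this
  have hroots : (c - Complex.I) * (c + Complex.I) = 0 := by
    linear_combination hc2 - Complex.I_mul_I
  rw [← hc]
  rcases mul_eq_zero.mp hroots with h | h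
  · rw [sub_eq_zero.mp h]; simp [conjTranspose_smul]
  · rw [eq_neg_of_add_eq_zero_left h]; simp [conjTranspose_smul]

lemma map_conjTranspose (hf : Admissible f) (X : Mat n) : f Xᴴ = (f X)ᴴ := by
  set J := f (Complex.I • 1)
  have hJ : ∀ Y, f (Complex.I • Y) = J * f Y := fun Y => by rw [← hf.map_mul, smul_one_mul]
  set S := X + Xᴴ
  set K := -Complex.I • (X - Xᴴ)
  have hS : S.IsHermitian := by simp [S, IsHermitian, add_comm]
  have hK : K.IsHermitian := by
    simp only [K, IsHermitian, conjTranspose_smul, conjTranspose_sub, conjTranspose_conjTranspose]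
    rw [← neg_sub, smul_neg, ← neg_smul]
    simp
  have hIK : Complex.I • K = X - Xᴴ := by simp [K, smul_smul]
  have h2X : 2 • X = S + Complex.I • K := by rw [hIK, two_nsmul]; simp only [S]; abel
  have h2XH : 2 • Xᴴ = S - Complex.I • K := by rw [hIK, two_nsmul]; simp only [S]; abel
  apply Matrix.nsmul_right_injective two_ne_zero
  calc 2 • f Xᴴ = f S - J * f K := by rw [← hf.map_nsmul, h2XH, hf.map_sub, hJ]
    _ = (f S + J * f K)ᴴ := by
      rw [conjTranspose_add, conjTranspose_mul, (hf.isHermitian_map hS).eq,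
        (hf.isHermitian_map hK).eq, hf.conjTranspose_map_I_smul_one, mul_neg,
        (hf.commute_map_I_smul_one (f K)).eq, sub_eq_add_neg]
    _ = 2 • (f X)ᴴ := by rw [← conjTranspose_nsmul, ← hf.map_nsmul, h2X, hf.map_add S, hJ]

lemma posDef_sub_of_posDef_sub (hf : Admissible f) {A X Y : Mat n} (hX : X.PosDef)
    (hY : Y.PosDef) (h : (Y - Aᴴ * (f X)⁻¹ * A).PosDef) :
    (X - f A * (f Y)⁻¹ * (f A)ᴴ).PosDef := by
  have hf' := hf.map_posDef h
  rw [hf.map_sub, hf.map_mul, hf.map_mul, hf.map_conjTranspose, hf.map_inv, hf.map_map] at hf'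
  exact hX.schur_complement_swap (f A) (hf.map_posDef hY) hf'

end Admissible

section PlusEquation

variable {n : ℕ}

def plusMap (f : Mat n → Mat n) (A Q X : Mat n) : Mat n := Q - Aᴴ * (f X)⁻¹ * A

def plusIter (f : Mat n → Mat n) (A Q : Mat n) (m : ℕ) : Mat n := (plusMap f A Q)^[m] Q

def plusSeqMap (f : Mat n → Mat n) (A Q : Mat n) (k : ℕ) (X : Mat n) : Mat n :=
  Qs f A Q k - (As f A Q k)ᴴ * (X - Bs f A Q k)⁻¹ * As f A Q k

variable {f : Mat n → Mat n} {A Q : Mat n}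

lemma plusIter_zero : plusIter f A Q 0 = Q := rfl

lemma plusIter_succ (m : ℕ) : plusIter f A Q (m + 1) = plusMap f A Q (plusIter f A Q m) :=
  Function.iterate_succ_apply' _ _ _

lemma plusMap_add_sub (Q' X : Mat n) : plusMap f A Q' X = plusMap f A Q X + (Q' - Q) := by
  simp only [plusMap]; abel

lemma As_zero : As f A Q 0 = f A * (f Q)⁻¹ * A := rfl

lemma Bs_zero : Bs f A Q 0 = f A * (f Q)⁻¹ * (f A)ᴴ := rfl

lemma Qs_zero : Qs f A Q 0 = Q - Aᴴ * (f Q)⁻¹ * A := rfl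

lemma Qs_zero_eq_plusIter_one : Qs f A Q 0 = plusIter f A Q 1 := rfl

lemma As_succ (k : ℕ) :
    As f A Q (k + 1) = As f A Q 0 * (Qs f A Q 0 - Bs f A Q k)⁻¹ * As f A Q k := rfl

lemma Bs_succ (k : ℕ) : Bs f A Q (k + 1) =
    Bs f A Q 0 + As f A Q 0 * (Qs f A Q 0 - Bs f A Q k)⁻¹ * (As f A Q 0)ᴴ := rfl

lemma Qs_succ (k : ℕ) : Qs f A Q (k + 1) =
    Qs f A Q k - (As f A Q k)ᴴ * (Qs f A Q 0 - Bs f A Q k)⁻¹ * As f A Q k := rfl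

lemma plusSeqMap_Qs_zero (k : ℕ) : plusSeqMap f A Q k (Qs f A Q 0) = Qs f A Q (k + 1) := rfl

lemma plusMap_mono (hf : Admissible f) {X X' : Mat n} (hX : X.PosDef) (h : X ≤ X') :
    plusMap f A Q X ≤ plusMap f A Q X' := by
  have := ((hf.map_posDef hX).inv_le_inv (hf.map_le h)).conjTranspose_mul_mul_same A
  rw [Matrix.le_iff]
  convert this using 1
  simp only [plusMap, Matrix.mul_sub, Matrix.sub_mul]
  abel

lemma le_plusIter (hf : Admissible f) {XS : Mat n} (hXS : XS.PosDef)
    (hC : XS ≤ plusMap f A Q XS) : ∀ m, XS ≤ plusIter f A Q m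
  | 0 => hC.trans <| sub_le_self _ <| Matrix.nonneg_iff_posSemidef.mpr <|
      (hf.map_posDef hXS).inv.posSemidef.conjTranspose_mul_mul_same A
  | m + 1 => by
    rw [plusIter_succ]
    exact hC.trans (plusMap_mono hf hXS (le_plusIter hf hXS hC m))

lemma plusIter_add_sub_le (hf : Admissible f) (hY : ∀ m, (plusIter f A Q m).PosDef) {Q' : Mat n}
    (hQ : Q ≤ Q') : ∀ m, plusIter f A Q m + (Q' - Q) ≤ plusIter f A Q' m
  | 0 => by rw [plusIter_zero, plusIter_zero, add_sub_cancel]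
  | m + 1 => by
    rw [plusIter_succ, plusIter_succ, plusMap_add_sub (Q := Q) Q']
    gcongr
    exact plusMap_mono hf (hY m) <|
      (le_add_of_nonneg_right (sub_nonneg.mpr hQ)).trans (plusIter_add_sub_le hf hY hQ m)

lemma posDef_plusIter_add_plusIter_sub (hf : Admissible f)
    (hY : ∀ m, (plusIter f A Q m).PosDef) :
    ∀ t m, (plusIter f A Q m + plusIter f (f A)ᴴ Q t - Q).PosDef
  | 0, m => by simpa [plusIter_zero] using hY m
  | t + 1, m => by
    have ih := posDef_plusIter_add_plusIter_sub hf hY t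
    have hZ : (plusIter f (f A)ᴴ Q t).PosDef := by simpa [plusIter_zero] using ih 0
    have h : (plusIter f (f A)ᴴ Q t - Aᴴ * (f (plusIter f A Q m))⁻¹ * A).PosDef := by
      convert ih (m + 1) using 1
      rw [plusIter_succ, plusMap]
      abel
    convert hf.posDef_sub_of_posDef_sub (hY m) hZ h using 1
    rw [plusIter_succ, plusMap, conjTranspose_conjTranspose]
    abel

lemma plusMap_plusMap (hf : Admissible f) (hQ : (f Q).PosDef) {X : Mat n} (hX : X.PosDef)
    (hXB : (X - Bs f A Q 0).PosDef) :
    plusMap f A Q (plusMap f A Q X) = plusSeqMap f A Q 0 X := by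
  have hfX : f (plusMap f A Q X) = f Q - (f A)ᴴ * X⁻¹ * f A := by
    rw [plusMap, hf.map_sub, hf.map_mul, hf.map_mul, hf.map_conjTranspose, hf.map_inv, hf.map_map]
  have hAs : (As f A Q 0)ᴴ = Aᴴ * (f Q)⁻¹ * (f A)ᴴ := by
    rw [As_zero, conjTranspose_mul, conjTranspose_mul, conjTranspose_nonsing_inv,
      hQ.isHermitian.eq, Matrix.mul_assoc]
  rw [plusMap, hfX, sub_mul_inv_mul_inv_eq_add _ _ _ _ hQ.isUnit hX.isUnit hXB.isUnit,
    plusSeqMap, hAs, As_zero, Bs_zero, Qs_zero]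
  simp only [Matrix.mul_add, Matrix.add_mul, Matrix.mul_assoc]
  abel

lemma plusSeqMap_plusSeqMap_zero {k : ℕ} (hW : (Qs f A Q 0 - Bs f A Q k).PosDef) {X : Mat n}
    (hX : (X - Bs f A Q 0).PosDef) (hX' : (X - Bs f A Q (k + 1)).PosDef) :
    plusSeqMap f A Q k (plusSeqMap f A Q 0 X) = plusSeqMap f A Q (k + 1) X := by
  set W := Qs f A Q 0 - Bs f A Q k with hWdef
  set V := X - Bs f A Q 0 with hVdef
  have harg : Qs f A Q 0 - (As f A Q 0)ᴴ * V⁻¹ * As f A Q 0 - Bs f A Q k =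
      W - (As f A Q 0)ᴴ * V⁻¹ * As f A Q 0 := by
    rw [hWdef]; abel
  have hS : V - As f A Q 0 * W⁻¹ * (As f A Q 0)ᴴ = X - Bs f A Q (k + 1) := by
    rw [Bs_succ, hVdef]; abel
  have hAs : (As f A Q (k + 1))ᴴ = (As f A Q k)ᴴ * W⁻¹ * (As f A Q 0)ᴴ := by
    rw [As_succ, conjTranspose_mul, conjTranspose_mul, conjTranspose_nonsing_inv,
      hW.isHermitian.eq, Matrix.mul_assoc]
  simp only [plusSeqMap]
  rw [harg, sub_mul_inv_mul_inv_eq_add _ _ _ _ hW.isUnit hX.isUnit (hS ▸ hX'.isUnit), hS, hAs,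
    As_succ, Qs_succ]
  simp only [Matrix.mul_add, Matrix.add_mul, Matrix.mul_assoc]
  abel

lemma As_dual_zero (hf : Admissible f) (hQ : (f Q).IsHermitian) :
    As f (f A)ᴴ Q 0 = (As f A Q 0)ᴴ := by
  rw [As_zero, As_zero, hf.map_conjTranspose, hf.map_map, conjTranspose_mul, conjTranspose_mul,
    conjTranspose_nonsing_inv, hQ.eq, Matrix.mul_assoc]

lemma Bs_dual_zero (hf : Admissible f) : Bs f (f A)ᴴ Q 0 = Q - Qs f A Q 0 := by
  rw [Bs_zero, Qs_zero, hf.map_conjTranspose, hf.map_map, conjTranspose_conjTranspose]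
  abel

lemma Qs_dual_zero : Qs f (f A)ᴴ Q 0 = Q - Bs f A Q 0 := by
  rw [Qs_zero, Bs_zero, conjTranspose_conjTranspose]

lemma Bs_eq_sub_plusIter (hf : Admissible f) (hY : ∀ m, (plusIter f A Q m).PosDef) :
    ∀ k, Bs f A Q k = Q - plusIter f (f A)ᴴ Q (2 * k + 1)
  | 0 => by
    rw [Bs_zero, plusIter_succ, plusIter_zero, plusMap, conjTranspose_conjTranspose]
    abel
  | k + 1 => by
    have hfQ : (f Q).PosDef := hf.map_posDef (hY 0)
    have hpos := posDef_plusIter_add_plusIter_sub hf hY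
    set Z := plusIter f (f A)ᴴ Q (2 * k + 1)
    have hW : Z - Bs f (f A)ᴴ Q 0 = Qs f A Q 0 - Bs f A Q k := by
      rw [Bs_dual_zero hf, Bs_eq_sub_plusIter hf hY k]; abel
    have hWpd : (Qs f A Q 0 - Bs f A Q k).PosDef := by
      rw [Bs_eq_sub_plusIter hf hY k, Qs_zero_eq_plusIter_one]
      convert hpos (2 * k + 1) 1 using 1
      abel
    have hZ : Z.PosDef := by simpa [plusIter_zero] using hpos (2 * k + 1) 0
    rw [show 2 * (k + 1) + 1 = 2 * k + 1 + 1 + 1 by ring, plusIter_succ, plusIter_succ,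
      plusMap_plusMap hf hfQ hZ (hW ▸ hWpd), plusSeqMap, hW, As_dual_zero hf hfQ.isHermitian,
      Qs_dual_zero, conjTranspose_conjTranspose, Bs_succ]
    abel

lemma posDef_plusIter_sub_Bs (hf : Admissible f) (hY : ∀ m, (plusIter f A Q m).PosDef)
    (m k : ℕ) : (plusIter f A Q m - Bs f A Q k).PosDef := by
  rw [Bs_eq_sub_plusIter hf hY]
  convert posDef_plusIter_add_plusIter_sub hf hY (2 * k + 1) m using 1
  abel

lemma posDef_Qs_zero_sub_Bs (hf : Admissible f) (hY : ∀ m, (plusIter f A Q m).PosDef)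
    (k : ℕ) : (Qs f A Q 0 - Bs f A Q k).PosDef :=
  posDef_plusIter_sub_Bs hf hY 1 k

lemma plusIter_add_two_mul (hf : Admissible f) (hY : ∀ m, (plusIter f A Q m).PosDef) :
    ∀ k m, plusIter f A Q (m + 2 * (k + 1)) = plusSeqMap f A Q k (plusIter f A Q m)
  | 0, m => by
    have hfQ : (f Q).PosDef := hf.map_posDef (hY 0)
    rw [← plusMap_plusMap hf hfQ (hY m) (posDef_plusIter_sub_Bs hf hY m 0),
      ← plusIter_succ, ← plusIter_succ]
  | k + 1, m => by
    rw [show m + 2 * (k + 1 + 1) = m + 2 * (0 + 1) + 2 * (k + 1) by ring,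
      plusIter_add_two_mul hf hY k, plusIter_add_two_mul hf hY 0,
      plusSeqMap_plusSeqMap_zero (posDef_Qs_zero_sub_Bs hf hY k)
        (posDef_plusIter_sub_Bs hf hY m 0) (posDef_plusIter_sub_Bs hf hY m (k + 1))]

lemma Qs_eq_plusIter (hf : Admissible f) (hY : ∀ m, (plusIter f A Q m).PosDef) :
    ∀ k, Qs f A Q k = plusIter f A Q (2 * k + 1)
  | 0 => rfl
  | k + 1 => by
    rw [← plusSeqMap_Qs_zero, Qs_zero_eq_plusIter_one, ← plusIter_add_two_mul hf hY]
    ring_nf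

end PlusEquation

theorem stmt_16_general {n : ℕ} (f : Mat n → Mat n) (hf : Admissible f)
    (A Q Qe : Mat n) (hgt : (Qe - Q).PosDef)
    (XS : Mat n) (hXS : XS.PosDef)
    (hXSle : (Q - Aᴴ * (f XS)⁻¹ * A - XS).PosSemidef) :
    (∀ k, (Qs f A Q 0 - Bs f A Q k).PosDef ∧ (Qs f A Qe 0 - Bs f A Qe k).PosDef) ∧
    (∀ k, (Qs f A Qe k - Qs f A Q k - (Qe - Q)).PosSemidef ∧
      (Bs f A Q k - Bs f A Qe k).PosSemidef) := by
  have hY : ∀ m, (plusIter f A Q m).PosDef := fun m => hXS.of_le (le_plusIter hf hXS hXSle m)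
  have hQQe : Q ≤ Qe := hgt.posSemidef
  have hYe : ∀ m, (plusIter f A Qe m).PosDef := fun m =>
    (hY m).of_le ((le_add_of_nonneg_right (sub_nonneg.mpr hQQe)).trans
      (plusIter_add_sub_le hf hY hQQe m))
  have hZ : ∀ t, (plusIter f (f A)ᴴ Q t).PosDef := fun t => by
    simpa [plusIter_zero] using posDef_plusIter_add_plusIter_sub hf hY t 0
  refine ⟨fun k => ⟨posDef_Qs_zero_sub_Bs hf hY k, posDef_Qs_zero_sub_Bs hf hYe k⟩,
    fun k => ⟨?_, ?_⟩⟩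
  · rw [Qs_eq_plusIter hf hYe, Qs_eq_plusIter hf hY, sub_sub]
    exact plusIter_add_sub_le hf hY hQQe (2 * k + 1)
  · rw [Bs_eq_sub_plusIter hf hY, Bs_eq_sub_plusIter hf hYe]
    set Z := plusIter f (f A)ᴴ Q (2 * k + 1)
    set Ze := plusIter f (f A)ᴴ Qe (2 * k + 1)
    rw [show Q - Z - (Qe - Ze) = Ze - (Z + (Qe - Q)) by abel]
    exact plusIter_add_sub_le hf hZ hQQe (2 * k + 1)

/-- comparison with a perturbed plus-sign equation with `Q_ε > Q`:
both sequences are well defined, `Q_ε^{(k)} - Q^{(k)} ≥ Q_ε - Q` and `B_ε^{(k)} ≤ B^{(k)}`. -/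
theorem stmt_16 {n : ℕ} (f : Mat n → Mat n) (hf : Admissible f)
    (A Q Qe : Mat n) (hQ : Q.PosDef) (hQe : Qe.IsHermitian) (hgt : (Qe - Q).PosDef)
    (XS : Mat n) (hXS : XS.PosDef)
    (hXSle : (Q - Aᴴ * (f XS)⁻¹ * A - XS).PosSemidef) :
    (∀ k, (Qs f A Q 0 - Bs f A Q k).PosDef ∧ (Qs f A Qe 0 - Bs f A Qe k).PosDef) ∧
    (∀ k, (Qs f A Qe k - Qs f A Q k - (Qe - Q)).PosSemidef ∧
      (Bs f A Q k - Bs f A Qe k).PosSemidef) :=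
  stmt_16_general f hf A Q Qe hgt XS hXS hXSle
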